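/- arXiv:2001.07335 — 6 statements merged into one kernel-verified Lean document; each statement's English description precedes it below -/
import Mathlib

section
/- Let S ∈ ℝ^{n×k}, L ∈ ℝ^{k×k}, and s̃, ỹ ∈ ℝⁿ. Then the BFGS update of H = S L Sᵀ by (s̃, ỹ) equals [S, s̃] · L⁺ · [S, s̃]ᵀ, where [S, s̃] ∈ ℝ^{n×(k+1)} is S with the extra column s̃ appended and L⁺ = [I_k; −ỹᵀS] · L · [I_k, −Sᵀỹ] + E_{k+1}. -/
open Matrix

/-- The BFGS update of `H` by the pair `(s, y)`:
`(I - s yᵀ) H (I - y sᵀ) + s sᵀ`. -/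
def bfgsUpdate {ι : Type*} [Fintype ι] [DecidableEq ι]
    (H : Matrix ι ι ℝ) (s y : ι → ℝ) : Matrix ι ι ℝ :=
  (1 - Matrix.vecMulVec s y) * H * (1 - Matrix.vecMulVec y s) + Matrix.vecMulVec s s

/-- The `(k+1) × k` matrix `[I_k; -wᵀ]`: the identity `I_k` stacked on top of the row `-wᵀ`. -/
def stackId {k : ℕ} (w : Fin k → ℝ) : Matrix (Fin (k + 1)) (Fin k) ℝ :=
  Matrix.of fun i j => if h : (i : ℕ) < k then (if (⟨i, h⟩ : Fin k) = j then 1 else 0) else -w j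

/-- The `k × k` matrix whose last diagonal entry is `1` and all other entries are `0`. -/
def Emat (k : ℕ) : Matrix (Fin k) (Fin k) ℝ :=
  Matrix.of fun i j => if (i : ℕ) = k - 1 ∧ (j : ℕ) = k - 1 then 1 else 0

/-- The `n × (k+1)` matrix `[S, s]` obtained from `S` by appending the column `s`. -/
def appendCol {n k : ℕ} (S : Matrix (Fin n) (Fin k) ℝ) (s : Fin n → ℝ) :
    Matrix (Fin n) (Fin (k + 1)) ℝ :=
  Matrix.of fun i => Fin.snoc (S i) (s i)

lemma appendCol_mul_stackId {n k : ℕ} (S : Matrix (Fin n) (Fin k) ℝ) (s : Fin n → ℝ)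
    (w : Fin k → ℝ) : appendCol S s * stackId w = S - vecMulVec s w := by
  ext i j
  simp only [Matrix.mul_apply, appendCol, stackId, Matrix.of_apply, Fin.sum_univ_castSucc,
    Fin.snoc_castSucc, Fin.snoc_last, Matrix.sub_apply, Matrix.vecMulVec_apply]
  rw [Finset.sum_congr rfl (fun l _ => ?_), Finset.sum_ite_eq' Finset.univ j (fun l => S i l)]
  · simp [Fin.last]
    ring
  · have hl : ((l.castSucc : Fin (k+1)) : ℕ) < k := l.isLt
    rw [dif_pos hl]
    have : (⟨(l.castSucc : Fin (k+1)), hl⟩ : Fin k) = l := by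
      apply Fin.ext; simp
    rw [this]
    by_cases h : l = j <;> simp [h]

lemma appendCol_mul_Emat {n k : ℕ} (S : Matrix (Fin n) (Fin k) ℝ) (s : Fin n → ℝ) :
    appendCol S s * Emat (k + 1) * (appendCol S s)ᵀ = vecMulVec s s := by
  have step1 : appendCol S s * Emat (k + 1)
      = Matrix.of fun i m => if m = Fin.last k then s i else 0 := by
    ext i m
    rw [Matrix.mul_apply, Finset.sum_eq_single (Fin.last k)]
    · simp only [appendCol, Emat, Matrix.of_apply, Fin.snoc_last, Fin.val_last,
        Nat.add_sub_cancel]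
      by_cases h : (m : ℕ) = k
      · have hm : m = Fin.last k := Fin.ext (by simpa using h)
        simp [hm]
      · rw [if_neg (by tauto), if_neg (fun hm => h (by rw [hm]; simp)), mul_zero]
    · intro b _ hb
      have h2 : ¬ ((b : ℕ) = k + 1 - 1 ∧ (m : ℕ) = k + 1 - 1) := by
        intro ⟨h1, _⟩; exact hb (Fin.ext (by simpa using h1))
      simp only [Emat, Matrix.of_apply]
      rw [if_neg h2, mul_zero]
    · simp
  rw [step1]
  ext i j
  rw [Matrix.mul_apply, Finset.sum_eq_single (Fin.last k)]
  · simp [appendCol, vecMulVec_apply]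
  · intro b _ hb; simp [hb]
  · simp

/-- The BFGS update of `H = S L Sᵀ` by `(s̃, ỹ)` equals `[S, s̃] · L⁺ · [S, s̃]ᵀ` where
`L⁺ = [I_k; -ỹᵀS] · L · [I_k, -Sᵀỹ] + E_{k+1}`. -/
theorem stmt_2 (n k : ℕ) (S : Matrix (Fin n) (Fin k) ℝ) (L : Matrix (Fin k) (Fin k) ℝ)
    (s y : Fin n → ℝ) :
    bfgsUpdate (S * L * Sᵀ) s y =
      appendCol S s *
        (stackId (Matrix.vecMul y S) * L * (stackId (Matrix.vecMul y S))ᵀ + Emat (k + 1)) *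
        (appendCol S s)ᵀ := by
  have h1 : appendCol S s * stackId (y ᵥ* S) = S - vecMulVec s (y ᵥ* S) :=
    appendCol_mul_stackId S s _
  have h2 : (1 - vecMulVec s y) * S = S - vecMulVec s (y ᵥ* S) := by
    rw [Matrix.sub_mul, Matrix.one_mul]
    congr 1
    ext i j
    simp [Matrix.mul_apply, vecMulVec_apply, Matrix.vecMul, dotProduct,
      Finset.mul_sum, mul_comm, mul_assoc, mul_left_comm]
  have h3 : Sᵀ * (1 - vecMulVec y s) = (S - vecMulVec s (y ᵥ* S))ᵀ := by
    rw [← h2, Matrix.transpose_mul, Matrix.transpose_sub, Matrix.transpose_one]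
    congr 2
    ext i j
    simp [vecMulVec_apply, mul_comm]
  calc bfgsUpdate (S * L * Sᵀ) s y
      = ((1 - vecMulVec s y) * S) * L * (Sᵀ * (1 - vecMulVec y s)) + vecMulVec s s := by
        simp [bfgsUpdate, Matrix.mul_assoc]
    _ = (appendCol S s * stackId (y ᵥ* S)) * L * (appendCol S s * stackId (y ᵥ* S))ᵀ
        + appendCol S s * Emat (k + 1) * (appendCol S s)ᵀ := by
        rw [h1, h2, h3, appendCol_mul_Emat]
    _ = _ := by
        rw [Matrix.transpose_mul]
        simp only [Matrix.mul_add, Matrix.add_mul, Matrix.mul_assoc]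
end

section
/- Let m ≥ 1 and let (s̃_k)_{k≥0} and (ỹ_k)_{k≥0} be sequences of vectors in ℝⁿ. For k ≥ m let S_k = [s̃_0, …, s̃_{k−1}] ∈ ℝ^{n×k}. Let L_{m−1} ∈ ℝ^{m×m} and define L_k ∈ ℝ^{(k+1)×(k+1)} for k ≥ m by the recursion L_k = [I_k; −ỹ_kᵀS_k] · L_{k−1} · [I_k, −S_kᵀỹ_k] + E_{k+1}. Let (H_k)_{k≥m} be the sequence of n×n matrices with H_m = S_m L_{m−1} S_mᵀ and H_{k+1} equal to the BFGS update of H_k by (s̃_k, ỹ_k). Then H_k = S_k L_{k−1} S_kᵀ for every k ≥ m. -/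
open Matrix

/-- `S_k = [s̃_0, …, s̃_{k-1}]`, the `n × k` matrix whose columns are `s̃_0, …, s̃_{k-1}`. -/
def Smat {n : ℕ} (s : ℕ → Fin n → ℝ) (k : ℕ) : Matrix (Fin n) (Fin k) ℝ :=
  Matrix.of fun i j => s j i

lemma aux1 {n k : ℕ} (s y : ℕ → Fin n → ℝ) :
    Smat s (k + 1) * stackId (Matrix.vecMul (y k) (Smat s k)) =
      (1 - Matrix.vecMulVec (s k) (y k)) * Smat s k := by
  ext i j
  rw [Matrix.mul_apply, Fin.sum_univ_castSucc]
  simp [Smat, stackId, Matrix.mul_apply, Matrix.vecMulVec, Matrix.vecMul, dotProduct,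
    Matrix.sub_apply, Matrix.one_apply, sub_mul, mul_sub, Finset.sum_sub_distrib,
    Finset.mul_sum, Fin.val_eq_val, Finset.sum_ite_eq, Finset.sum_ite_eq', mul_comm]
  rw [show (∑ q : Fin n, s k i * (s (j : ℕ) q * y k q)) = ∑ q : Fin n, s (j : ℕ) q * (s k i * y k q)
      from Finset.sum_congr rfl fun q _ => by ring, ← sub_eq_add_neg]

lemma aux2 {n k : ℕ} (s : ℕ → Fin n → ℝ) :
    Smat s (k + 1) * Emat (k + 1) * (Smat s (k + 1))ᵀ = Matrix.vecMulVec (s k) (s k) := by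
  have hlast : ∀ x : Fin (k + 1), ((x : ℕ) = k) = (x = Fin.last k) := fun x => by
    simp [Fin.ext_iff]
  ext i j
  simp [Matrix.mul_apply, Emat, Smat, Matrix.vecMulVec, ite_and, mul_ite, ite_mul,
    hlast, Finset.sum_ite_eq, Finset.sum_ite_eq']

/-- Suppose `H_m = S_m L_{m-1} S_mᵀ`, the matrices `L_k` (`k ≥ m`) satisfy
`L_k = [I_k; -ỹ_kᵀ S_k] · L_{k-1} · [I_k, -S_kᵀ ỹ_k] + E_{k+1}`, and `H_{k+1}` is the BFGS
update of `H_k` by `(s̃_k, ỹ_k)` for `k ≥ m`.  Then `H_k = S_k L_{k-1} S_kᵀ` for all `k ≥ m`.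
Here `L : (k : ℕ) → Matrix (Fin k) (Fin k) ℝ` is indexed by size, i.e. `L k` denotes the
`k × k` matrix `L_{k-1}` of the paper. -/
theorem stmt_3 (n m : ℕ) (hm : 1 ≤ m) (s y : ℕ → Fin n → ℝ)
    (L : (k : ℕ) → Matrix (Fin k) (Fin k) ℝ)
    (H : ℕ → Matrix (Fin n) (Fin n) ℝ)
    (hL : ∀ k, m ≤ k →
      L (k + 1) =
        stackId (Matrix.vecMul (y k) (Smat s k)) * L k *
            (stackId (Matrix.vecMul (y k) (Smat s k)))ᵀ + Emat (k + 1))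
    (hHm : H m = Smat s m * L m * (Smat s m)ᵀ)
    (hH : ∀ k, m ≤ k → H (k + 1) = bfgsUpdate (H k) (s k) (y k)) :
    ∀ k, m ≤ k → H k = Smat s k * L k * (Smat s k)ᵀ := by
  intro k hk
  induction k, hk using Nat.le_induction with
  | base => exact hHm
  | succ k hk ih =>
    rw [hH k hk, ih, hL k hk, bfgsUpdate]
    have hA : (1 : Matrix (Fin n) (Fin n) ℝ) - Matrix.vecMulVec (y k) (s k) =
        ((1 : Matrix (Fin n) (Fin n) ℝ) - Matrix.vecMulVec (s k) (y k))ᵀ := by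
      ext i j
      simp [Matrix.vecMulVec, Matrix.one_apply, mul_comm, eq_comm]
    have key : Smat s (k + 1) *
          (stackId (Matrix.vecMul (y k) (Smat s k)) * L k *
            (stackId (Matrix.vecMul (y k) (Smat s k)))ᵀ) * (Smat s (k + 1))ᵀ =
        (Smat s (k + 1) * stackId (Matrix.vecMul (y k) (Smat s k))) * L k *
          (Smat s (k + 1) * stackId (Matrix.vecMul (y k) (Smat s k)))ᵀ := by
      simp only [Matrix.transpose_mul, Matrix.mul_assoc]
    rw [Matrix.mul_add, Matrix.add_mul, key, aux1, aux2]
    rw [Matrix.transpose_mul, hA]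
    simp only [Matrix.mul_assoc]
end

section
/- Let m ≥ 1, let (s̃_k)_{k≥0} and (ỹ_k)_{k≥0} be sequences in ℝⁿ, let S_k = [s̃_0, …, s̃_{k−1}], let L_{m−1} ∈ ℝ^{m×m} be symmetric positive definite, and define L_k for k ≥ m by L_k = [I_k; −ỹ_kᵀS_k] · L_{k−1} · [I_k, −S_kᵀỹ_k] + E_{k+1}. Let H_m = S_m L_{m−1} S_mᵀ and let H_{k+1} be the BFGS update of H_k by (s̃_k, ỹ_k) for k ≥ m. If for every k ≥ m the vector s̃_k lies in the range of H_k, then rank(H_k) = rank(H_m) = rank(S_m) for all k ≥ m; in particular rank(H_k) = m for all k ≥ m if and only if rank(H_m) = m. -/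
open Matrix

/-!
By induction, `H_k = S_k L_{k-1} S_kᵀ` with `L_{k-1}` positive definite. The recursion for `L`
is the BFGS update seen through `S`: `S_{k+1} [I_k; -ỹ_kᵀ S_k] = (I - s̃_k ỹ_kᵀ) S_k` and
`S_{k+1} E_{k+1} S_{k+1}ᵀ = s̃_k s̃_kᵀ`. The `E_{k+1}` term keeps `L_k` positive definite, since
it is positive on the kernel of `[I_k, -S_kᵀ ỹ_k]`. Positive definiteness gives
`rank H_k = rank S_k`. Finally `s̃_k ∈ range H_k ⊆ range S_k`, so appending the column `s̃_k`
leaves the rank of `S_k` unchanged.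
-/

namespace Matrix

open scoped MatrixOrder in
theorem rank_mul_mul_transpose_of_posDef {m n : Type*} [Fintype m] [Fintype n]
    (S : Matrix m n ℝ) {L : Matrix n n ℝ} (hL : L.PosDef) :
    (S * L * Sᵀ).rank = S.rank := by
  classical
  set C := CFC.sqrt L
  have hCC : C * C = L := CFC.sqrt_mul_sqrt_self L hL.posSemidef.nonneg
  have hCT : Cᵀ = C := by
    simpa [IsHermitian] using (nonneg_iff_posSemidef.mp (CFC.sqrt_nonneg L)).1
  have hC : IsUnit C.det := by
    refine (left_ne_zero_of_mul (a := C.det) (b := C.det) ?_).isUnit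
    rw [← det_mul, hCC]; exact hL.det_pos.ne'
  have hSLS : S * L * Sᵀ = (S * C) * (S * C)ᵀ := by
    rw [transpose_mul, hCT, ← hCC]; simp only [Matrix.mul_assoc]
  rw [hSLS, rank_self_mul_transpose, rank_mul_eq_left_of_isUnit_det C S hC]

end Matrix

section

variable {n k : ℕ}

theorem stackId_castSucc (w : Fin k → ℝ) (i j : Fin k) :
    stackId w i.castSucc j = (1 : Matrix (Fin k) (Fin k) ℝ) i j := by
  simp [stackId, one_apply]

theorem stackId_last (w : Fin k → ℝ) (j : Fin k) : stackId w (Fin.last k) j = -w j := by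
  simp [stackId]

theorem Emat_succ :
    Emat (k + 1) = vecMulVec (Pi.single (Fin.last k) 1) (Pi.single (Fin.last k) 1) := by
  ext i j
  simp only [Emat, vecMulVec, of_apply, Pi.single_apply, Fin.ext_iff, Fin.val_last,
    add_tsub_cancel_right]
  split_ifs <;> simp_all

theorem transpose_stackId_mulVec (w : Fin k → ℝ) (x : Fin (k + 1) → ℝ) :
    (stackId w)ᵀ *ᵥ x = Fin.init x - x (Fin.last k) • w := by
  ext j
  simp [mulVec, dotProduct, Fin.sum_univ_castSucc, stackId_castSucc, stackId_last, one_apply,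
    Fin.init, mul_comm, sub_eq_add_neg]

theorem posDef_stackId_mul_mul_transpose_add_Emat {L : Matrix (Fin k) (Fin k) ℝ}
    (hL : L.PosDef) (w : Fin k → ℝ) :
    (stackId w * L * (stackId w)ᵀ + Emat (k + 1)).PosDef := by
  have hLT : Lᵀ = L := by simpa [IsHermitian] using hL.1
  refine .of_dotProduct_mulVec_pos ?_ fun x hx => ?_
  · simp [IsHermitian, Emat_succ, hLT, Matrix.mul_assoc]
  set v := (stackId w)ᵀ *ᵥ x
  have hquad : x ⬝ᵥ ((stackId w * L * (stackId w)ᵀ + Emat (k + 1)) *ᵥ x) =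
      v ⬝ᵥ (L *ᵥ v) + x (Fin.last k) * x (Fin.last k) := by
    rw [add_mulVec, dotProduct_add, ← mulVec_mulVec, ← mulVec_mulVec, dotProduct_mulVec,
      ← mulVec_transpose, Emat_succ, vecMulVec_mulVec]
    simp [v, mul_comm, -mulVec_mulVec]
  rw [star_trivial, hquad]
  by_cases hv : v = 0
  · have hlast : x (Fin.last k) ≠ 0 := by
      intro h0
      refine hx (funext fun i => Fin.lastCases h0 (fun j => ?_) i)
      simpa [v, transpose_stackId_mulVec, h0, Fin.init] using congrFun hv j
    simpa [hv] using mul_self_pos.mpr hlast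
  · have := hL.dotProduct_mulVec_pos hv
    rw [star_trivial] at this
    nlinarith [mul_self_nonneg (x (Fin.last k))]

theorem Smat_succ_mul_stackId (s : ℕ → Fin n → ℝ) (w : Fin k → ℝ) :
    Smat s (k + 1) * stackId w = Smat s k - vecMulVec (s k) w := by
  ext i j
  simp [mul_apply, Fin.sum_univ_castSucc, stackId_castSucc, stackId_last, one_apply, Smat,
    vecMulVec, sub_eq_add_neg]

theorem Smat_mul_transpose_stackId {s : ℕ → Fin n → ℝ} {u : Fin k → ℝ}
    (hu : Smat s k *ᵥ u = s k) : Smat s k * (stackId (-u))ᵀ = Smat s (k + 1) := by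
  ext i j
  refine Fin.lastCases ?_ (fun j => ?_) j
  · simpa [mul_apply, stackId_last, Smat, mulVec, dotProduct] using congrFun hu i
  · simp [mul_apply, stackId_castSucc, one_apply, Smat]

theorem Smat_succ_mul_Emat_mul_transpose (s : ℕ → Fin n → ℝ) :
    Smat s (k + 1) * Emat (k + 1) * (Smat s (k + 1))ᵀ = vecMulVec (s k) (s k) := by
  have hcol : Smat s (k + 1) *ᵥ Pi.single (Fin.last k) 1 = s k := by
    ext i; simp [Smat]
  rw [Emat_succ, mul_vecMulVec, hcol, vecMulVec_mul, ← mulVec_transpose, transpose_transpose,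
    hcol]

theorem rank_Smat_succ_of_mulVec_eq {s : ℕ → Fin n → ℝ} {u : Fin k → ℝ}
    (hu : Smat s k *ᵥ u = s k) : (Smat s (k + 1)).rank = (Smat s k).rank := by
  refine le_antisymm ?_ ?_
  · rw [← Smat_mul_transpose_stackId hu]; exact rank_mul_le_left _ _
  · have h : Smat s (k + 1) * stackId (0 : Fin k → ℝ) = Smat s k := by
      rw [Smat_succ_mul_stackId]; ext; simp [vecMulVec]
    rw [← h]; exact rank_mul_le_left _ _

theorem bfgsUpdate_Smat_mul_mul_transpose (s y : ℕ → Fin n → ℝ) (L : Matrix (Fin k) (Fin k) ℝ) :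
    bfgsUpdate (Smat s k * L * (Smat s k)ᵀ) (s k) (y k) =
      Smat s (k + 1) * (stackId (y k ᵥ* Smat s k) * L * (stackId (y k ᵥ* Smat s k))ᵀ +
        Emat (k + 1)) * (Smat s (k + 1))ᵀ := by
  have hW : Smat s (k + 1) * stackId (y k ᵥ* Smat s k) =
      (1 - vecMulVec (s k) (y k)) * Smat s k := by
    rw [Smat_succ_mul_stackId, Matrix.sub_mul, Matrix.one_mul, vecMulVec_mul]
  rw [Matrix.mul_add, Matrix.add_mul, Smat_succ_mul_Emat_mul_transpose, bfgsUpdate]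
  congr 1
  have hconj : Smat s (k + 1) * (stackId (y k ᵥ* Smat s k) * L * (stackId (y k ᵥ* Smat s k))ᵀ) *
      (Smat s (k + 1))ᵀ = (Smat s (k + 1) * stackId (y k ᵥ* Smat s k)) * L *
        (Smat s (k + 1) * stackId (y k ᵥ* Smat s k))ᵀ := by
    simp only [transpose_mul, Matrix.mul_assoc]
  rw [hconj, hW, transpose_mul, transpose_sub, transpose_one, transpose_vecMulVec]
  simp only [Matrix.mul_assoc]

end

theorem stmt_6_general (n m : ℕ) (s y : ℕ → Fin n → ℝ)
    (L : (k : ℕ) → Matrix (Fin k) (Fin k) ℝ)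
    (H : ℕ → Matrix (Fin n) (Fin n) ℝ)
    (hLm : (L m).PosDef)
    (hL : ∀ k, m ≤ k →
      L (k + 1) =
        stackId (Matrix.vecMul (y k) (Smat s k)) * L k *
            (stackId (Matrix.vecMul (y k) (Smat s k)))ᵀ + Emat (k + 1))
    (hHm : H m = Smat s m * L m * (Smat s m)ᵀ)
    (hH : ∀ k, m ≤ k → H (k + 1) = bfgsUpdate (H k) (s k) (y k))
    (hrange : ∀ k, m ≤ k → ∃ x : Fin n → ℝ, (H k).mulVec x = s k) :
    (∀ k, m ≤ k → (H k).rank = (H m).rank) ∧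
      (H m).rank = (Smat s m).rank ∧
      ((∀ k, m ≤ k → (H k).rank = m) ↔ (H m).rank = m) := by
  have hrep : ∀ k, m ≤ k → H k = Smat s k * L k * (Smat s k)ᵀ ∧ (L k).PosDef := by
    intro k hk
    induction k, hk using Nat.le_induction with
    | base => exact ⟨hHm, hLm⟩
    | succ k hk ih =>
      rw [hH k hk, hL k hk, ih.1]
      exact ⟨bfgsUpdate_Smat_mul_mul_transpose s y (L k),
        posDef_stackId_mul_mul_transpose_add_Emat ih.2 _⟩
  have hrankH : ∀ k, m ≤ k → (H k).rank = (Smat s k).rank := fun k hk => by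
    rw [(hrep k hk).1, rank_mul_mul_transpose_of_posDef _ (hrep k hk).2]
  have hrankS : ∀ k, m ≤ k → (Smat s k).rank = (Smat s m).rank := by
    intro k hk
    induction k, hk using Nat.le_induction with
    | base => rfl
    | succ k hk ih =>
      obtain ⟨x, hx⟩ := hrange k hk
      rw [(hrep k hk).1, Matrix.mul_assoc, ← mulVec_mulVec] at hx
      rw [rank_Smat_succ_of_mulVec_eq hx, ih]
  have hconst : ∀ k, m ≤ k → (H k).rank = (H m).rank := fun k hk => by
    rw [hrankH k hk, hrankS k hk, hrankH m le_rfl]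
  exact ⟨hconst, hrankH m le_rfl, fun h => h m le_rfl, fun h k hk => (hconst k hk).trans h⟩

/-- With `L_{m-1}` symmetric positive definite, `L_k` given by the recursion
`L_k = [I_k; -ỹ_kᵀ S_k] · L_{k-1} · [I_k, -S_kᵀ ỹ_k] + E_{k+1}`, `H_m = S_m L_{m-1} S_mᵀ`,
and `H_{k+1}` the BFGS update of `H_k` by `(s̃_k, ỹ_k)`: if every `s̃_k` (`k ≥ m`) lies in
the range of `H_k`, then `rank(H_k) = rank(H_m) = rank(S_m)` for all `k ≥ m`; in particular
`rank(H_k) = m` for all `k ≥ m` iff `rank(H_m) = m`.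
Here `L : (k : ℕ) → Matrix (Fin k) (Fin k) ℝ` is indexed by size, i.e. `L k` denotes the
`k × k` matrix `L_{k-1}` of the paper. -/
theorem stmt_6 (n m : ℕ) (hm : 1 ≤ m) (s y : ℕ → Fin n → ℝ)
    (L : (k : ℕ) → Matrix (Fin k) (Fin k) ℝ)
    (H : ℕ → Matrix (Fin n) (Fin n) ℝ)
    (hLm : (L m).PosDef)
    (hL : ∀ k, m ≤ k →
      L (k + 1) =
        stackId (Matrix.vecMul (y k) (Smat s k)) * L k *
            (stackId (Matrix.vecMul (y k) (Smat s k)))ᵀ + Emat (k + 1))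
    (hHm : H m = Smat s m * L m * (Smat s m)ᵀ)
    (hH : ∀ k, m ≤ k → H (k + 1) = bfgsUpdate (H k) (s k) (y k))
    (hrange : ∀ k, m ≤ k → ∃ x : Fin n → ℝ, (H k).mulVec x = s k) :
    (∀ k, m ≤ k → (H k).rank = (H m).rank) ∧
      (H m).rank = (Smat s m).rank ∧
      ((∀ k, m ≤ k → (H k).rank = m) ↔ (H m).rank = m) :=
  stmt_6_general n m s y L H hLm hL hHm hH hrange
end

section
/- Let m ≥ 1, let s̃_{k−m}, …, s̃_k and ỹ_k be vectors in ℝⁿ, let S̃_k = [s̃_{k−m}, …, s̃_{k−1}] and S̃_{k+1} = [s̃_{k+1−m}, …, s̃_k] (both in ℝ^{n×m}), and let t ∈ ℝᵐ satisfy S̃_{k+1} t = s̃_{k−m}. Then (I − s̃_k ỹ_kᵀ) S̃_k = S̃_{k+1} T(t). -/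
open Matrix

/-- `S̃_k = [s̃_{k-m}, …, s̃_{k-1}]`: here `s i` denotes `s̃_{k-m+i}` for `i : Fin (m+1)`,
and this matrix has columns `s 0, …, s (m-1)`. -/
def Stil0 {n m : ℕ} (s : Fin (m + 1) → Fin n → ℝ) : Matrix (Fin n) (Fin m) ℝ :=
  Matrix.of fun i j => s j.castSucc i

/-- `S̃_{k+1} = [s̃_{k+1-m}, …, s̃_k]`: with `s i` denoting `s̃_{k-m+i}`, this matrix has
columns `s 1, …, s m`. -/
def Stil1 {n m : ℕ} (s : Fin (m + 1) → Fin n → ℝ) : Matrix (Fin n) (Fin m) ℝ :=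
  Matrix.of fun i j => s j.succ i

/-- The `m × m` matrix `T(t)` (0-indexed): column `0` has entries `t i` for `i < m-1` and
`t (m-1) - ỹᵀ s̃_{k-m}` in row `m-1`; column `j ≥ 1` has a `1` in row `j-1` and
`-ỹᵀ s̃_{k-m+j}` in row `m-1`; all other entries are `0`. -/
def Tmat {n m : ℕ} (s : Fin (m + 1) → Fin n → ℝ) (y : Fin n → ℝ) (t : Fin m → ℝ) :
    Matrix (Fin m) (Fin m) ℝ :=
  Matrix.of fun i j =>
    if (j : ℕ) = 0 then
      (if (i : ℕ) = m - 1 then t i - y ⬝ᵥ s 0 else t i)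
    else if (i : ℕ) + 1 = (j : ℕ) then 1
    else if (i : ℕ) = m - 1 then -(y ⬝ᵥ s j.castSucc)
    else 0

/-! Write `N` for the upper shift matrix and `e₁, e_m` for the first and last standard basis
vectors. Then `T(t) = N + t e₁ᵀ - e_m (ỹᵀ S̃_k)`. Since `S̃_{k+1} N` is `S̃_k` with its first column
replaced by zero, and `S̃_{k+1} t = s̃_{k-m}` is exactly that first column, multiplying out gives
`S̃_{k+1} T(t) = S̃_k - s̃_k ỹᵀ S̃_k`. -/

def shiftMatrix (m : ℕ) : Matrix (Fin m) (Fin m) ℝ :=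
  Matrix.of fun i j => if (i : ℕ) + 1 = j then 1 else 0

theorem Stil1_mul_shiftMatrix_add {n m : ℕ} (s : Fin (m + 1 + 1) → Fin n → ℝ) :
    Stil1 s * shiftMatrix (m + 1) + vecMulVec (s 0) (Pi.single 0 1) = Stil0 s := by
  ext i j
  cases j using Fin.cases with
  | zero => simp [Stil0, Stil1, shiftMatrix, mul_apply, vecMulVec_apply]
  | succ j =>
    rw [Matrix.add_apply, mul_apply, Finset.sum_eq_single j.castSucc]
    · simp [Stil0, Stil1, shiftMatrix, vecMulVec_apply]
    · intro l _ hl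
      have : (l : ℕ) ≠ j := fun h => hl (Fin.ext h)
      simp [shiftMatrix, this]
    · simp

theorem Stil1_mulVec_single_one {n m : ℕ} (s : Fin (m + 1) → Fin n → ℝ) (j : Fin m) :
    Stil1 s *ᵥ Pi.single j 1 = s j.succ := by
  ext i
  simp [Stil1]

theorem vecMul_Stil0 {n m : ℕ} (s : Fin (m + 1) → Fin n → ℝ) (y : Fin n → ℝ) (j : Fin m) :
    (y ᵥ* Stil0 s) j = y ⬝ᵥ s j.castSucc := rfl

theorem Tmat_eq {n m : ℕ} (s : Fin (m + 1 + 1) → Fin n → ℝ) (y : Fin n → ℝ)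
    (t : Fin (m + 1) → ℝ) :
    Tmat s y t = shiftMatrix (m + 1) + vecMulVec t (Pi.single 0 1)
      - vecMulVec (Pi.single (Fin.last m) 1) (y ᵥ* Stil0 s) := by
  ext i j
  simp only [Tmat, shiftMatrix, Matrix.sub_apply, Matrix.add_apply, of_apply, vecMulVec_apply,
    vecMul_Stil0, Pi.single_apply, Fin.ext_iff, Fin.val_last, Fin.val_zero, add_tsub_cancel_right]
  split_ifs <;> first | omega | simp_all

theorem stmt_7_general (n m : ℕ) (s : Fin (m + 1) → Fin n → ℝ) (y : Fin n → ℝ)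
    (t : Fin m → ℝ) (ht : (Stil1 s).mulVec t = s 0) :
    (1 - Matrix.vecMulVec (s (Fin.last m)) y) * Stil0 s = Stil1 s * Tmat s y t := by
  rcases m with _ | m
  · ext _ j
    exact j.elim0
  rw [Tmat_eq, Matrix.mul_sub, Matrix.mul_add, mul_vecMulVec, mul_vecMulVec, ht,
    Stil1_mul_shiftMatrix_add, Stil1_mulVec_single_one, Fin.succ_last, Matrix.sub_mul,
    Matrix.one_mul, vecMulVec_mul]

/-- If `S̃_{k+1} t = s̃_{k-m}`, then `(I - s̃_k ỹ_kᵀ) S̃_k = S̃_{k+1} T(t)`. -/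
theorem stmt_7 (n m : ℕ) (hm : 1 ≤ m) (s : Fin (m + 1) → Fin n → ℝ) (y : Fin n → ℝ)
    (t : Fin m → ℝ) (ht : (Stil1 s).mulVec t = s 0) :
    (1 - Matrix.vecMulVec (s (Fin.last m)) y) * Stil0 s = Stil1 s * Tmat s y t :=
  stmt_7_general n m s y t ht
end

section
/- Let m ≥ 1, let s̃_{k−m}, …, s̃_k and ỹ_k be vectors in ℝⁿ, let S̃_k = [s̃_{k−m}, …, s̃_{k−1}] ∈ ℝ^{n×m}, let L̂ ∈ ℝ^{m×m}, and let H′ be the BFGS update of S̃_k L̂ S̃_kᵀ by (s̃_k, ỹ_k). Then for every g ∈ ℝⁿ, the vector H′g − c(g) · s̃_{k−m} lies in span{s̃_{k+1−m}, …, s̃_k}, where c(g) denotes the first component of the vector L̂ S̃_kᵀ (I − ỹ_k s̃_kᵀ) g ∈ ℝᵐ. -/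
open Matrix

lemma vmv_mulVec {n : ℕ} (a b g : Fin n → ℝ) :
    (Matrix.vecMulVec a b).mulVec g = (b ⬝ᵥ g) • a := by
  ext i
  simp only [Matrix.mulVec, dotProduct, Matrix.vecMulVec_apply, Pi.smul_apply,
    smul_eq_mul]
  rw [Finset.sum_mul]
  exact Finset.sum_congr rfl fun j _ => by ring

lemma Stil0_mulVec {n m : ℕ} (s : Fin (m + 1) → Fin n → ℝ) (v : Fin m → ℝ) :
    (Stil0 s).mulVec v = ∑ j : Fin m, v j • s j.castSucc := by
  ext i
  simp [Stil0, Matrix.mulVec, dotProduct, Finset.sum_apply, mul_comm]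

/-- If `H′` is the BFGS update of `S̃_k L̂ S̃_kᵀ` by `(s̃_k, ỹ_k)`, then for every `g`, the
vector `H′ g - c(g) • s̃_{k-m}` lies in `span{s̃_{k+1-m}, …, s̃_k}`, where `c(g)` is the
first component of `L̂ S̃_kᵀ (I - ỹ_k s̃_kᵀ) g`. -/
theorem stmt_10 (n m : ℕ) (hm : 1 ≤ m) (s : Fin (m + 1) → Fin n → ℝ) (y : Fin n → ℝ)
    (L : Matrix (Fin m) (Fin m) ℝ) (g : Fin n → ℝ) :
    (bfgsUpdate (Stil0 s * L * (Stil0 s)ᵀ) (s (Fin.last m)) y).mulVec g -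
        ((L * (Stil0 s)ᵀ *
            (1 - Matrix.vecMulVec y (s (Fin.last m)))).mulVec g (⟨0, hm⟩ : Fin m)) • s 0
      ∈ Submodule.span ℝ (Set.range fun j : Fin m => s j.succ) := by
  classical
  set slast := s (Fin.last m) with hslast
  set S := Stil0 s with hS
  set v : Fin m → ℝ := (L * Sᵀ * (1 - Matrix.vecMulVec y slast)).mulVec g with hv
  set i0 : Fin m := ⟨0, hm⟩ with hi0
  have key : (bfgsUpdate (S * L * Sᵀ) slast y).mulVec g
      = S.mulVec v + ((slast ⬝ᵥ g) - y ⬝ᵥ S.mulVec v) • slast := by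
    have hv2 : v = L.mulVec (Sᵀ.mulVec ((1 - Matrix.vecMulVec y slast).mulVec g)) := by
      rw [hv, ← Matrix.mulVec_mulVec, ← Matrix.mulVec_mulVec]
    unfold bfgsUpdate
    rw [Matrix.add_mulVec, ← Matrix.mulVec_mulVec, ← Matrix.mulVec_mulVec,
      ← Matrix.mulVec_mulVec, ← Matrix.mulVec_mulVec, ← hv2,
      Matrix.sub_mulVec, Matrix.one_mulVec, vmv_mulVec, vmv_mulVec]
    module
  rw [key]
  have hsum : S.mulVec v = v i0 • s i0.castSucc
      + ∑ j ∈ Finset.univ.erase i0, v j • s j.castSucc := by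
    rw [Stil0_mulVec, ← Finset.add_sum_erase _ _ (Finset.mem_univ i0)]
  have h0 : (i0.castSucc : Fin (m+1)) = 0 := by
    ext; simp [hi0]
  have hmem : ∀ j ∈ Finset.univ.erase i0, v j • s j.castSucc
      ∈ Submodule.span ℝ (Set.range fun j : Fin m => s j.succ) := by
    intro j hj
    have hj0 : (j : ℕ) ≠ 0 := by
      intro h
      exact (Finset.mem_erase.1 hj).1 (by ext; simpa [hi0] using h)
    have hjlt : (j : ℕ) - 1 < m := lt_of_le_of_lt (Nat.sub_le _ _) j.isLt
    have hidx : j.castSucc = (⟨(j : ℕ) - 1, hjlt⟩ : Fin m).succ := by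
      apply Fin.ext
      simp [Fin.succ, Nat.sub_add_cancel (Nat.one_le_iff_ne_zero.2 hj0)]
    rw [hidx]
    exact Submodule.smul_mem _ _ (Submodule.subset_span ⟨_, rfl⟩)
  have hlastmem : slast ∈ Submodule.span ℝ (Set.range fun j : Fin m => s j.succ) := by
    have hidx : Fin.last m = (⟨m - 1, Nat.sub_lt hm Nat.one_pos⟩ : Fin m).succ := by
      apply Fin.ext
      simp [Fin.succ, Nat.sub_add_cancel hm]
    rw [hslast, hidx]
    exact Submodule.subset_span ⟨_, rfl⟩
  have hgoal : S.mulVec v + ((slast ⬝ᵥ g) - y ⬝ᵥ S.mulVec v) • slast - v i0 • s 0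
      = (∑ j ∈ Finset.univ.erase i0, v j • s j.castSucc)
        + ((slast ⬝ᵥ g) - y ⬝ᵥ S.mulVec v) • slast := by
    rw [hsum, h0]; module
  rw [hgoal]
  exact Submodule.add_mem _ (Submodule.sum_mem _ hmem) (Submodule.smul_mem _ _ hlastmem)
end

section
/- Let U ∈ ℝ^{n×m} satisfy UᵀU = I_m, let S̃ ∈ ℝ^{n×m} have all its columns in the column space of U, let L ∈ ℝ^{m×m}, and set H̃ = S̃ L S̃ᵀ. Let s, y ∈ ℝⁿ with s in the column space of U. If (Uᵀ H̃ U)(Uᵀ y) = Uᵀ s, then H̃ y = s (i.e. H̃ satisfies the secant equation for the pair (s, y)). -/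
open Matrix

lemma proj_fix {n m : ℕ} (U : Matrix (Fin n) (Fin m) ℝ) (hU : Uᵀ * U = 1)
    (v : Fin n → ℝ) (hv : v ∈ Submodule.span ℝ (Set.range Uᵀ)) :
    (U * Uᵀ).mulVec v = v := by
  induction hv using Submodule.span_induction with
  | mem x hx =>
      obtain ⟨j, rfl⟩ := hx
      have : Uᵀ.mulVec (Uᵀ j) = Pi.single j 1 := by
        funext k
        have := congrFun (congrFun hU k) j
        simpa [Matrix.mulVec, Matrix.mul_apply, dotProduct, Matrix.one_apply,
          Pi.single_apply, eq_comm, mul_comm] using this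
      rw [← Matrix.mulVec_mulVec, this]
      funext i
      simp [Matrix.mulVec_single, Matrix.transpose_apply, Matrix.mulVec, dotProduct,
        Pi.single_apply]
  | zero => simp
  | add x y _ _ hx hy => rw [Matrix.mulVec_add, hx, hy]
  | smul c x _ hx => rw [Matrix.mulVec_smul, hx]

/-- Let `U ∈ ℝ^{n×m}` have orthonormal columns (`UᵀU = 1`), let every column of
`S̃ ∈ ℝ^{n×m}` lie in the column space of `U`, let `H̃ = S̃ L S̃ᵀ`, and let `s` lie in the
column space of `U`.  If `(Uᵀ H̃ U)(Uᵀ y) = Uᵀ s`, then `H̃ y = s`. -/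
theorem stmt_15 (n m : ℕ) (U : Matrix (Fin n) (Fin m) ℝ) (hU : Uᵀ * U = 1)
    (S : Matrix (Fin n) (Fin m) ℝ)
    (hS : ∀ j : Fin m, Sᵀ j ∈ Submodule.span ℝ (Set.range Uᵀ))
    (L : Matrix (Fin m) (Fin m) ℝ) (s y : Fin n → ℝ)
    (hsU : s ∈ Submodule.span ℝ (Set.range Uᵀ))
    (h : (Uᵀ * (S * L * Sᵀ) * U).mulVec (Uᵀ.mulVec y) = Uᵀ.mulVec s) :
    (S * L * Sᵀ).mulVec y = s := by
  have hPS : U * Uᵀ * S = S := by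
    apply Matrix.ext
    intro i j
    have := congrFun (proj_fix U hU (Sᵀ j) (hS j)) i
    simpa [Matrix.mulVec, Matrix.mul_apply, dotProduct, Finset.mul_sum,
      Finset.sum_mul, mul_assoc] using this
  have hPs : (U * Uᵀ).mulVec s = s := proj_fix U hU s hsU
  have h2 := congrArg (fun v => U.mulVec v) h
  simp only [Matrix.mulVec_mulVec] at h2
  have hSP : Sᵀ * (U * Uᵀ) = Sᵀ := by
    have := congrArg Matrix.transpose hPS
    simpa [Matrix.transpose_mul, Matrix.mul_assoc] using this
  have key : U * (Uᵀ * (S * L * Sᵀ) * U) * Uᵀ = S * L * Sᵀ := by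
    calc U * (Uᵀ * (S * L * Sᵀ) * U) * Uᵀ
        = (U * Uᵀ * S) * L * (Sᵀ * (U * Uᵀ)) := by simp only [Matrix.mul_assoc]
      _ = S * L * Sᵀ := by rw [hPS, hSP]
  rw [← key, ← Matrix.mulVec_mulVec, ← Matrix.mulVec_mulVec, h, Matrix.mulVec_mulVec, hPs]
end
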